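/- Let m, ℓ ∈ ℕ and 0 ≤ q ≤ 1. Suppose d, d⁰ : ({-1,0,1}^m) → ℝ satisfy |d_ω| ≤ q^{|ω|}·|d⁰_ω| for every frequency vector ω, and Σ_ω 2^{-|ω|} (d⁰_ω)² ≤ 1. Define f(θ) = Σ_ω d_ω Φ_ω(θ) and g(θ) = Σ_{|ω| ≤ ℓ} d_ω Φ_ω(θ). Then Δ(f,g) ≤ q^{ℓ+1}. -/

import Mathlib

open MeasureTheory Finset

/-- The trigonometric monomial factor: `φ₀ = 1`, `φ₁ = cos`, `φ₋₁ = sin`. -/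
noncomputable def phi (w : ℤ) (x : ℝ) : ℝ :=
  if w = 1 then Real.cos x else if w = -1 then Real.sin x else 1

/-- The multivariate trigonometric monomial `Φ_ω(θ) = ∏ i, φ_{ω i}(θ i)`. -/
noncomputable def Phi {m : ℕ} (ω : Fin m → ℤ) (θ : Fin m → ℝ) : ℝ :=
  ∏ i, phi (ω i) (θ i)

/-- The weight `|ω|` of a frequency vector: the number of nonzero entries. -/
def wt {m : ℕ} (ω : Fin m → ℤ) : ℕ := (Finset.univ.filter fun i => ω i ≠ 0).card

/-- The finite set of all frequency vectors `ω ∈ {-1,0,1}^m`. -/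
def freqSet (m : ℕ) : Finset (Fin m → ℤ) :=
  Fintype.piFinset fun _ => ({-1, 0, 1} : Finset ℤ)

/-- The mean of a function over the cube `[0, 2π]^m`. -/
noncomputable def cubeMean (m : ℕ) (h : (Fin m → ℝ) → ℝ) : ℝ :=
  ((2 * Real.pi) ^ m)⁻¹ *
    ∫ θ in Set.Icc (0 : Fin m → ℝ) (fun _ => 2 * Real.pi), h θ

/-- The average `L²` distance `Δ(f,g)` over the parameter cube `[0, 2π]^m`. -/
noncomputable def Delta (m : ℕ) (f g : (Fin m → ℝ) → ℝ) : ℝ :=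
  Real.sqrt (cubeMean m fun θ => (f θ - g θ) ^ 2)

/-! The monomials `Φ_ω`, `ω ∈ {-1,0,1}^m`, are orthogonal on the cube and `Φ_ω` has mean
square `2^{-|ω|}`, since the mean of `cos²` and `sin²` is `1/2`. Hence `Δ(f,g)²` is the
Parseval sum `∑_{|ω| > ℓ} 2^{-|ω|} d_ω²`, and `d_ω² ≤ q^{2(ℓ+1)} (d⁰_ω)²` on those `ω`
bounds it by `q^{2(ℓ+1)}`. -/

lemma continuous_phi (w : ℤ) : Continuous (phi w) := by
  unfold phi
  split_ifs <;> fun_prop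

lemma continuous_Phi {m : ℕ} (ω : Fin m → ℤ) : Continuous (Phi ω) :=
  continuous_finsetProd _ fun i _ => (continuous_phi (ω i)).comp (continuous_apply i)

lemma mem_freqSet_iff {m : ℕ} {ω : Fin m → ℤ} :
    ω ∈ freqSet m ↔ ∀ i, ω i ∈ ({-1, 0, 1} : Finset ℤ) :=
  Fintype.mem_piFinset

theorem setIntegral_Icc_pi_prod {ι : Type*} [Fintype ι] (a b : ι → ℝ) (f : ι → ℝ → ℝ) :
    ∫ x in Set.Icc a b, ∏ i, f i (x i) = ∏ i, ∫ t in Set.Icc (a i) (b i), f i t := by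
  rw [← Set.pi_univ_Icc, volume_pi, Measure.restrict_pi_pi, integral_fintype_prod_eq_prod]

lemma cubeMean_prod {m : ℕ} (f : Fin m → ℝ → ℝ) :
    cubeMean m (fun θ => ∏ i, f i (θ i))
      = ∏ i, (2 * Real.pi)⁻¹ * ∫ x in Set.Icc 0 (2 * Real.pi), f i x := by
  rw [cubeMean, setIntegral_Icc_pi_prod, prod_mul_distrib, prod_const, card_univ,
    Fintype.card_fin, inv_pow]
  rfl

lemma cubeMean_sum {α : Type*} {m : ℕ} (s : Finset α) (F : α → (Fin m → ℝ) → ℝ)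
    (hF : ∀ a ∈ s, Continuous (F a)) :
    cubeMean m (fun θ => ∑ a ∈ s, F a θ) = ∑ a ∈ s, cubeMean m (F a) := by
  rw [cubeMean, integral_finsetSum s
    fun a ha => (hF a ha).continuousOn.integrableOn_compact isCompact_Icc, mul_sum]
  rfl

lemma cubeMean_const_mul {m : ℕ} (c : ℝ) (h : (Fin m → ℝ) → ℝ) :
    cubeMean m (fun θ => c * h θ) = c * cubeMean m h := by
  rw [cubeMean, cubeMean, integral_const_mul, mul_left_comm]

lemma integral_phi_mul_phi {a b : ℤ} (ha : a ∈ ({-1, 0, 1} : Finset ℤ))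
    (hb : b ∈ ({-1, 0, 1} : Finset ℤ)) :
    ∫ x in Set.Icc 0 (2 * Real.pi), phi a x * phi b x
      = if a = b then (if a = 0 then 2 * Real.pi else Real.pi) else 0 := by
  rw [integral_Icc_eq_integral_Ioc, ← intervalIntegral.integral_of_le (by positivity)]
  have hs : ∀ x, phi (-1) x = Real.sin x := fun x => by norm_num [phi]
  have hc : ∀ x, phi 1 x = Real.cos x := fun x => by norm_num [phi]
  have h0 : ∀ x, phi 0 x = 1 := fun x => by norm_num [phi]
  simp only [mem_insert, mem_singleton] at ha hb
  rcases ha with rfl | rfl | rfl <;> rcases hb with rfl | rfl | rfl <;>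
    simp only [hs, hc, h0, one_mul, mul_one, ← pow_two, mul_comm (Real.cos _) (Real.sin _),
      integral_sin_sq, integral_cos_sq, integral_sin_mul_cos₁, integral_sin, integral_cos,
      intervalIntegral.integral_const, Real.sin_two_pi, Real.cos_two_pi, Real.sin_zero,
      Real.cos_zero, smul_eq_mul] <;>
    norm_num

lemma cubeMean_Phi_mul_Phi {m : ℕ} {ω ω' : Fin m → ℤ} (hω : ω ∈ freqSet m)
    (hω' : ω' ∈ freqSet m) :
    cubeMean m (fun θ => Phi ω θ * Phi ω' θ) = if ω = ω' then ((2 : ℝ) ^ wt ω)⁻¹ else 0 := by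
  simp only [Phi, ← prod_mul_distrib]
  rw [cubeMean_prod fun i x => phi (ω i) x * phi (ω' i) x]
  simp only [integral_phi_mul_phi (mem_freqSet_iff.1 hω _) (mem_freqSet_iff.1 hω' _)]
  split_ifs with h
  · subst h
    have : ∀ i, (2 * Real.pi)⁻¹ * (if ω i = ω i then (if ω i = 0 then 2 * Real.pi else Real.pi)
        else 0) = if ω i = 0 then 1 else 2⁻¹ := fun i => by
      rw [if_pos rfl]; split_ifs <;> field_simp
    rw [prod_congr rfl fun i _ => this i, prod_ite, prod_const_one, one_mul, prod_const, inv_pow]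
    rfl
  · obtain ⟨i, hi⟩ := Function.ne_iff.mp h
    exact prod_eq_zero (mem_univ i) (by rw [if_neg hi, mul_zero])

theorem cubeMean_sq_sum_mul_Phi {m : ℕ} {s : Finset (Fin m → ℤ)} (hs : s ⊆ freqSet m)
    (c : (Fin m → ℤ) → ℝ) :
    cubeMean m (fun θ => (∑ ω ∈ s, c ω * Phi ω θ) ^ 2) = ∑ ω ∈ s, ((2 : ℝ) ^ wt ω)⁻¹ * c ω ^ 2 := by
  have hexpand : ∀ θ, (∑ ω ∈ s, c ω * Phi ω θ) ^ 2
      = ∑ ω ∈ s, ∑ ω' ∈ s, c ω * c ω' * (Phi ω θ * Phi ω' θ) := fun θ => by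
    rw [sq, sum_mul_sum]
    exact sum_congr rfl fun _ _ => sum_congr rfl fun _ _ => by ring
  have hcont : ∀ ω ω', Continuous fun θ => c ω * c ω' * (Phi ω θ * Phi ω' θ) := fun ω ω' =>
    continuous_const.mul ((continuous_Phi ω).mul (continuous_Phi ω'))
  simp_rw [hexpand]
  rw [cubeMean_sum _ _ fun ω _ => continuous_finsetSum _ fun ω' _ => hcont ω ω']
  refine sum_congr rfl fun ω hω => ?_
  rw [cubeMean_sum _ _ fun ω' _ => hcont ω ω']
  simp_rw [cubeMean_const_mul]
  rw [sum_congr rfl fun ω' hω' => by rw [cubeMean_Phi_mul_Phi (hs hω) (hs hω')]]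
  simp only [mul_ite, mul_zero, sum_ite_eq, if_pos hω]
  ring

lemma sq_le_sq_mul_sq_of_abs_le {x y r : ℝ} (h : |x| ≤ r * |y|) : x ^ 2 ≤ r ^ 2 * y ^ 2 := by
  rw [← sq_abs x, ← sq_abs y, ← mul_pow]
  exact pow_le_pow_left₀ (abs_nonneg x) h 2

lemma sum_high_weight_le {m ℓ : ℕ} {q : ℝ} (hq0 : 0 ≤ q) (hq1 : q ≤ 1)
    {d d0 : (Fin m → ℤ) → ℝ} (hd : ∀ ω ∈ freqSet m, |d ω| ≤ q ^ wt ω * |d0 ω|)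
    (hd0 : ∑ ω ∈ freqSet m, ((2 : ℝ) ^ wt ω)⁻¹ * d0 ω ^ 2 ≤ 1) :
    ∑ ω ∈ (freqSet m).filter (fun ω => ¬ wt ω ≤ ℓ), ((2 : ℝ) ^ wt ω)⁻¹ * d ω ^ 2
      ≤ (q ^ (ℓ + 1)) ^ 2 := by
  have hcoeff : ∀ ω ∈ (freqSet m).filter (fun ω => ¬ wt ω ≤ ℓ),
      ((2 : ℝ) ^ wt ω)⁻¹ * d ω ^ 2 ≤ (q ^ (ℓ + 1)) ^ 2 * (((2 : ℝ) ^ wt ω)⁻¹ * d0 ω ^ 2) := by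
    intro ω hω
    rw [mem_filter, not_le, Nat.lt_iff_add_one_le] at hω
    have hqpow : q ^ wt ω ≤ q ^ (ℓ + 1) := pow_le_pow_of_le_one hq0 hq1 hω.2
    have hsq := sq_le_sq_mul_sq_of_abs_le
      ((hd ω hω.1).trans (mul_le_mul_of_nonneg_right hqpow (abs_nonneg _)))
    rw [mul_left_comm]
    exact mul_le_mul_of_nonneg_left hsq (by positivity)
  calc _ ≤ ∑ ω ∈ (freqSet m).filter (fun ω => ¬ wt ω ≤ ℓ),
        (q ^ (ℓ + 1)) ^ 2 * (((2 : ℝ) ^ wt ω)⁻¹ * d0 ω ^ 2) := sum_le_sum hcoeff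
    _ ≤ (q ^ (ℓ + 1)) ^ 2 * ∑ ω ∈ freqSet m, ((2 : ℝ) ^ wt ω)⁻¹ * d0 ω ^ 2 := by
      rw [← mul_sum]
      exact mul_le_mul_of_nonneg_left
        (sum_le_sum_of_subset_of_nonneg (filter_subset _ _) fun _ _ _ => by positivity)
        (by positivity)
    _ ≤ (q ^ (ℓ + 1)) ^ 2 := mul_le_of_le_one_right (by positivity) hd0

theorem stmt3 (m ℓ : ℕ) (q : ℝ) (hq0 : 0 ≤ q) (hq1 : q ≤ 1)
    (d d0 : (Fin m → ℤ) → ℝ)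
    (hd : ∀ ω ∈ freqSet m, |d ω| ≤ q ^ wt ω * |d0 ω|)
    (hd0 : ∑ ω ∈ freqSet m, ((2 : ℝ) ^ wt ω)⁻¹ * d0 ω ^ 2 ≤ 1) :
    Delta m (fun θ => ∑ ω ∈ freqSet m, d ω * Phi ω θ)
        (fun θ => ∑ ω ∈ (freqSet m).filter (fun ω => wt ω ≤ ℓ), d ω * Phi ω θ) ≤
      q ^ (ℓ + 1) := by
  have htail : ∀ θ, (∑ ω ∈ freqSet m, d ω * Phi ω θ)
      - ∑ ω ∈ (freqSet m).filter (fun ω => wt ω ≤ ℓ), d ω * Phi ω θ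
      = ∑ ω ∈ (freqSet m).filter (fun ω => ¬ wt ω ≤ ℓ), d ω * Phi ω θ := fun θ =>
    sub_eq_of_eq_add' (sum_filter_add_sum_filter_not _ _ _).symm
  rw [Delta, funext fun θ => congrArg (· ^ 2) (htail θ),
    cubeMean_sq_sum_mul_Phi (filter_subset _ _), Real.sqrt_le_left (by positivity)]
  exact sum_high_weight_le hq0 hq1 hd hd0
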